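/- Let n ≥ 1 and s ≥ 3 be integers, let P_n(x) = (1/n!)·(d/dx)^n (x^n(1−x)^n) be the shifted Legendre polynomial, let Q_n(x) = (1−x)^n, and let T_n(x) = c₀ + c₁x + ⋯ + c_n x^n be a polynomial with arbitrary real coefficients. Then the s-fold integral I_s = ∫₀¹⋯∫₀¹ P_n(x₁)Q_n(x₂)T_n(x₃)/(1 − x₁x₂x₃⋯x_s) dx₁⋯dx_s equals (−1)^n · ∑_{k=n}^{∞} [k(k−1)⋯(k−n+1)/n!] · B(k+1, n+1)² · T(k,n) / (k+1)^{s−3}, where B denotes the Euler Beta function and T(k,n) = ∑_{i=0}^{n} c_i/(k+1+i). -/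

import Mathlib

open MeasureTheory Finset

/-- The shifted Legendre polynomial `P_n(x) = (1/n!) (d/dx)^n (x^n (1-x)^n)`. -/
noncomputable def shiftedLegendre (n : ℕ) (x : ℝ) : ℝ :=
  (1 / (n.factorial : ℝ)) * iteratedDeriv n (fun y : ℝ => y ^ n * (1 - y) ^ n) x

/-- The Euler Beta function `B(x, y) = Γ(x)Γ(y)/Γ(x+y)`. -/
noncomputable def eulerBeta (x y : ℝ) : ℝ :=
  Real.Gamma x * Real.Gamma y / Real.Gamma (x + y)

/-!
Expanding `1 / (1 - x₁⋯x_s)` as a geometric series, which may be integrated termwise because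
`∫ (x₁⋯x_s)^k = (k+1)^{-s}` is summable for `s ≥ 2`, turns the integral of
`∏ᵢ gᵢ(xᵢ) / (1 - x₁⋯x_s)` into `∑ₖ ∏ᵢ ∫₀¹ yᵏ gᵢ(y) dy`, since the cube integral of a product of
one-variable functions factors.
The factors are elementary: `∫ yᵏ (1-y)ⁿ = B(k+1, n+1)`, `∫ yᵏ T_n = T(k,n)`, `∫ yᵏ = 1/(k+1)` for
each of the `s - 3` free variables, and `n` integrations by parts (the boundary terms vanish since
`xⁿ(1-x)ⁿ` has zeros of order `n` at both ends) give
`∫ yᵏ P_n = (-1)ⁿ k(k-1)⋯(k-n+1)/n! · B(k+1, n+1)`, which vanishes for `k < n`.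
-/

open scoped Nat
open scoped Polynomial
open Polynomial (X C derivative)

theorem Polynomial.iteratedDeriv_eval {𝕜 : Type*} [NontriviallyNormedField 𝕜] (p : 𝕜[X]) (m : ℕ) :
    iteratedDeriv m (fun x => p.eval x) = fun x => (derivative^[m] p).eval x := by
  induction m with
  | zero => simp
  | succ m ih =>
    ext x
    rw [iteratedDeriv_succ, ih, Function.iterate_succ_apply', Polynomial.deriv]

theorem Polynomial.isRoot_iterate_derivative_of_pow_dvd {R : Type*} [CommRing R] {p : R[X]}
    {a : R} {i n : ℕ} (h : (X - C a) ^ n ∣ p) (hi : i < n) : (derivative^[i] p).IsRoot a :=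
  Polynomial.dvd_iff_isRoot.mp <| (dvd_pow_self _ (Nat.sub_ne_zero_of_lt hi)).trans
    (Polynomial.pow_sub_dvd_iterate_derivative_of_pow_dvd i h)

theorem shiftedLegendre_eq_eval (n : ℕ) (x : ℝ) :
    shiftedLegendre n x = (n ! : ℝ)⁻¹ * (derivative^[n] (X ^ n * (1 - X) ^ n : ℝ[X])).eval x := by
  have h : (fun y : ℝ => y ^ n * (1 - y) ^ n) = fun y => (X ^ n * (1 - X) ^ n : ℝ[X]).eval y := by
    simp
  rw [shiftedLegendre, h, Polynomial.iteratedDeriv_eval, one_div]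

theorem continuous_shiftedLegendre (n : ℕ) : Continuous (shiftedLegendre n) := by
  simp_rw [funext (shiftedLegendre_eq_eval n)]
  fun_prop

theorem isRoot_iterate_derivative_X_pow_mul_one_sub_X_pow {n i : ℕ} (hi : i < n) :
    (derivative^[i] (X ^ n * (1 - X) ^ n : ℝ[X])).IsRoot 0 ∧
      (derivative^[i] (X ^ n * (1 - X) ^ n : ℝ[X])).IsRoot 1 := by
  refine ⟨Polynomial.isRoot_iterate_derivative_of_pow_dvd ?_ hi,
    Polynomial.isRoot_iterate_derivative_of_pow_dvd ?_ hi⟩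
  · simp
  · refine Dvd.dvd.mul_left (pow_dvd_pow_of_dvd ?_ n) _
    exact ⟨-1, by simp⟩

theorem integral_pow_mul_derivative_eval {a b : ℝ} (q : ℝ[X]) (ha : q.IsRoot a) (hb : q.IsRoot b)
    (k : ℕ) :
    ∫ x in a..b, x ^ k * q.derivative.eval x = -k * ∫ x in a..b, x ^ (k - 1) * q.eval x := by
  rw [intervalIntegral.integral_mul_deriv_eq_deriv_mul (fun x _ => hasDerivAt_pow k x)
    (fun x _ => q.hasDerivAt x)
    ((by fun_prop : Continuous fun x : ℝ => (k : ℝ) * x ^ (k - 1)).intervalIntegrable _ _)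
    (q.derivative.continuous.intervalIntegrable _ _), ha.eq_zero, hb.eq_zero,
    ← intervalIntegral.integral_const_mul]
  simp [mul_assoc]

theorem integral_pow_mul_iterate_derivative_eval {a b : ℝ} (m : ℕ) (q : ℝ[X])
    (hq : ∀ i < m, (derivative^[i] q).IsRoot a ∧ (derivative^[i] q).IsRoot b) (k : ℕ) :
    ∫ x in a..b, x ^ k * (derivative^[m] q).eval x =
      (-1) ^ m * k.descFactorial m * ∫ x in a..b, x ^ (k - m) * q.eval x := by
  induction m generalizing q with
  | zero => simp
  | succ m ih =>
    have hq' : ∀ i < m, (derivative^[i] q.derivative).IsRoot a ∧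
        (derivative^[i] q.derivative).IsRoot b := fun i hi => by
      simpa only [← Function.iterate_succ_apply] using hq (i + 1) (by omega)
    rw [Function.iterate_succ_apply, ih _ hq',
      integral_pow_mul_derivative_eval q (hq 0 (by omega)).1 (hq 0 (by omega)).2,
      Nat.descFactorial_succ, Nat.sub_sub]
    rcases le_or_gt m k with hmk | hkm
    · push_cast [hmk]; ring
    · simp [Nat.descFactorial_eq_zero_iff_lt.mpr hkm]

theorem integral_pow_mul_one_sub_pow (k n : ℕ) :
    ∫ x in (0 : ℝ)..1, x ^ k * (1 - x) ^ n = k ! * n ! / (k + n + 1)! := by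
  induction n generalizing k with
  | zero =>
    simp only [pow_zero, mul_one, integral_pow, one_pow, zero_pow k.succ_ne_zero, sub_zero,
      add_zero, Nat.factorial_zero, Nat.factorial_succ k]
    push_cast
    field_simp
  | succ n ih =>
    have hsplit (x : ℝ) :
        x ^ k * (1 - x) ^ (n + 1) = x ^ k * (1 - x) ^ n - x ^ (k + 1) * (1 - x) ^ n := by ring
    simp_rw [hsplit]
    rw [intervalIntegral.integral_sub
      ((by fun_prop : Continuous fun x : ℝ => x ^ k * (1 - x) ^ n).intervalIntegrable _ _)
      ((by fun_prop : Continuous fun x : ℝ => x ^ (k + 1) * (1 - x) ^ n).intervalIntegrable _ _),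
      ih, ih, show k + 1 + n + 1 = k + (n + 1) + 1 by ring]
    simp only [Nat.factorial_succ (k + n + 1), Nat.factorial_succ k, Nat.factorial_succ n,
      show k + (n + 1) = k + n + 1 by ring]
    push_cast
    field_simp
    ring

theorem eulerBeta_natCast_add_one (k n : ℕ) :
    eulerBeta (k + 1) (n + 1) = k ! * n ! / (k + n + 1)! := by
  rw [eulerBeta, show (k + 1 : ℝ) + (n + 1) = ((k + n + 1 : ℕ) : ℝ) + 1 by push_cast; ring,
    Real.Gamma_nat_eq_factorial, Real.Gamma_nat_eq_factorial, Real.Gamma_nat_eq_factorial]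

theorem integral_pow_mul_shiftedLegendre (n k : ℕ) :
    ∫ x in (0 : ℝ)..1, x ^ k * shiftedLegendre n x =
      (-1) ^ n * k.descFactorial n / n ! * (k ! * n ! / (k + n + 1)!) := by
  simp_rw [shiftedLegendre_eq_eval, mul_left_comm _ (n ! : ℝ)⁻¹]
  rw [intervalIntegral.integral_const_mul, integral_pow_mul_iterate_derivative_eval n _
    (fun i hi => isRoot_iterate_derivative_X_pow_mul_one_sub_X_pow hi)]
  rcases lt_or_ge k n with hkn | hnk
  · simp [Nat.descFactorial_eq_zero_iff_lt.mpr hkn]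
  · have hpow (x : ℝ) :
        x ^ (k - n) * (X ^ n * (1 - X) ^ n : ℝ[X]).eval x = x ^ k * (1 - x) ^ n := by
      simp [← mul_assoc, ← pow_add, Nat.sub_add_cancel hnk]
    simp_rw [hpow, integral_pow_mul_one_sub_pow]
    ring

theorem integral_pow_mul_sum_mul_pow (k n : ℕ) (c : ℕ → ℝ) :
    ∫ x in (0 : ℝ)..1, x ^ k * ∑ i ∈ range (n + 1), c i * x ^ i =
      ∑ i ∈ range (n + 1), c i / (k + 1 + i) := by
  simp_rw [mul_sum, mul_left_comm _ (c _), ← pow_add]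
  rw [intervalIntegral.integral_finsetSum fun i _ =>
    (by fun_prop : Continuous fun x : ℝ => c i * x ^ (k + i)).intervalIntegrable _ _]
  refine sum_congr rfl fun i _ => ?_
  rw [intervalIntegral.integral_const_mul, integral_pow, one_pow, zero_pow (by omega), sub_zero]
  push_cast
  ring

section Cube

variable {ι : Type*} [Fintype ι]

theorem setIntegral_Icc_prod_eq_prod {a b : ι → ℝ} (hab : a ≤ b) (f : ι → ℝ → ℝ) :
    ∫ x in Set.Icc a b, ∏ i, f i (x i) = ∏ i, ∫ y in a i..b i, f i y := by
  rw [← Set.pi_univ_Icc, volume_pi, Measure.restrict_pi_pi, integral_fintype_prod_eq_prod]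
  exact prod_congr rfl fun i _ => by
    rw [intervalIntegral.integral_of_le (hab i), integral_Icc_eq_integral_Ioc]

theorem setIntegral_Icc_prod_pow (k : ℕ) :
    ∫ x in Set.Icc (0 : ι → ℝ) 1, (∏ i, x i) ^ k = ((k : ℝ) + 1)⁻¹ ^ Fintype.card ι := by
  simp_rw [← prod_pow]
  rw [setIntegral_Icc_prod_eq_prod zero_le_one fun _ y => y ^ k]
  simp

theorem ae_prod_lt_one_of_mem_Icc [Nonempty ι] :
    ∀ᵐ x : ι → ℝ, x ∈ Set.Icc (0 : ι → ℝ) 1 → ∏ i, x i < 1 := by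
  classical
  obtain ⟨i⟩ := ‹Nonempty ι›
  filter_upwards [volume_pi (ι := ι) (α := fun _ => ℝ) ▸ Measure.ae_eval_ne _ i (1 : ℝ)]
    with x hx1 ⟨hx0, hx⟩
  calc ∏ j, x j = x i * ∏ j ∈ univ.erase i, x j := (mul_prod_erase _ _ (mem_univ i)).symm
    _ ≤ x i * 1 := mul_le_mul_of_nonneg_left
      (prod_le_one (fun j _ => hx0 j) (fun j _ => hx j)) (hx0 i)
    _ < 1 := by simpa using (hx i).lt_of_ne hx1

theorem summable_setIntegral_norm_prod_pow_mul (hι : 2 ≤ Fintype.card ι)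
    {N : (ι → ℝ) → ℝ} (hN : Continuous N) :
    Summable fun k : ℕ => ∫ x in Set.Icc (0 : ι → ℝ) 1, ‖(∏ i, x i) ^ k * N x‖ := by
  obtain ⟨C, hC⟩ := isCompact_Icc.exists_bound_of_continuousOn hN.continuousOn
  have hbound (k : ℕ) : ∫ x in Set.Icc (0 : ι → ℝ) 1, ‖(∏ i, x i) ^ k * N x‖ ≤
      C * ((k : ℝ) + 1)⁻¹ ^ Fintype.card ι := by
    rw [← setIntegral_Icc_prod_pow, ← integral_const_mul]
    refine setIntegral_mono_on (Continuous.integrableOn_Icc (by fun_prop))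
      (Continuous.integrableOn_Icc (by fun_prop)) measurableSet_Icc fun x hx => ?_
    have hprod : 0 ≤ (∏ i, x i) ^ k := pow_nonneg (prod_nonneg fun i _ => hx.1 i) k
    rw [norm_mul, Real.norm_of_nonneg hprod, mul_comm C]
    exact mul_le_mul_of_nonneg_left (hC x hx) hprod
  have hsum : Summable fun k : ℕ => ((k : ℝ) + 1)⁻¹ ^ Fintype.card ι := by
    simpa [inv_pow] using (summable_nat_add_iff 1).mpr
      (Real.summable_one_div_nat_pow.mpr (by omega : 1 < Fintype.card ι))
  exact (hsum.mul_left C).of_nonneg_of_le (fun k => integral_nonneg fun x => norm_nonneg _) hbound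

theorem setIntegral_div_one_sub_prod_eq_tsum (hι : 2 ≤ Fintype.card ι)
    {N : (ι → ℝ) → ℝ} (hN : Continuous N) :
    ∫ x in Set.Icc (0 : ι → ℝ) 1, N x / (1 - ∏ i, x i) =
      ∑' k : ℕ, ∫ x in Set.Icc (0 : ι → ℝ) 1, (∏ i, x i) ^ k * N x := by
  have : Nonempty ι := Fintype.card_pos_iff.mp (by omega)
  rw [integral_tsum_of_summable_integral_norm
    (fun k => Continuous.integrableOn_Icc (by fun_prop))
    (summable_setIntegral_norm_prod_pow_mul hι hN)]
  refine setIntegral_congr_ae measurableSet_Icc ?_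
  filter_upwards [ae_prod_lt_one_of_mem_Icc] with x hx hmem
  rw [tsum_mul_right, tsum_geometric_of_lt_one (prod_nonneg fun i _ => hmem.1 i) (hx hmem),
    div_eq_inv_mul]

theorem setIntegral_prod_div_one_sub_prod_eq_tsum (hι : 2 ≤ Fintype.card ι) {g : ι → ℝ → ℝ}
    (hg : ∀ i, Continuous (g i)) :
    ∫ x in Set.Icc (0 : ι → ℝ) 1, (∏ i, g i (x i)) / (1 - ∏ i, x i) =
      ∑' k : ℕ, ∏ i, ∫ y in (0 : ℝ)..1, y ^ k * g i y := by
  rw [setIntegral_div_one_sub_prod_eq_tsum hι (by fun_prop)]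
  simp_rw [← prod_pow, ← prod_mul_distrib]
  exact tsum_congr fun k => setIntegral_Icc_prod_eq_prod zero_le_one fun i y => y ^ k * g i y

end Cube

/-- For `n ≥ 1`, `s ≥ 3`, `P_n` the shifted Legendre polynomial, `Q_n(x) = (1-x)^n` and
`T_n(x) = ∑ cᵢ xⁱ`, the `s`-fold integral of `P_n(x₁)Q_n(x₂)T_n(x₃)/(1-x₁⋯x_s)` over the
unit cube equals
`(-1)^n ∑_{k=n}^∞ [k(k-1)⋯(k-n+1)/n!] B(k+1,n+1)² T(k,n)/(k+1)^{s-3}`,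
with `T(k,n) = ∑_{i=0}^n cᵢ/(k+1+i)` (written below with `k = n + j`, `j ≥ 0`). -/
theorem stmt_15 (n s : ℕ) (hs : 3 ≤ s) (c : ℕ → ℝ) :
    (∫ x in Set.Icc (0 : Fin s → ℝ) 1,
        shiftedLegendre n (x ⟨0, by omega⟩) * (1 - x ⟨1, by omega⟩) ^ n *
          (∑ i ∈ range (n + 1), c i * x ⟨2, by omega⟩ ^ i) /
          (1 - ∏ i, x i)) =
      (-1 : ℝ) ^ n *
        ∑' j : ℕ,
          (∏ i ∈ range n, (((n + j : ℕ) : ℝ) - i)) / (n.factorial : ℝ) *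
            eulerBeta ((n + j : ℕ) + 1) (n + 1) ^ 2 *
            (∑ i ∈ range (n + 1), c i / (((n + j : ℕ) : ℝ) + 1 + i)) /
            (((n + j : ℕ) : ℝ) + 1) ^ (s - 3) := by
  obtain ⟨m, rfl⟩ : ∃ m, s = m + 3 := ⟨s - 3, by omega⟩
  let g : Fin (m + 3) → ℝ → ℝ := Fin.cons (shiftedLegendre n) <| Fin.cons (fun y => (1 - y) ^ n) <|
    Fin.cons (fun y => ∑ i ∈ range (n + 1), c i * y ^ i) fun _ _ => 1
  have hg : ∀ i, Continuous (g i) := by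
    refine Fin.cases ?_ (Fin.cases ?_ (Fin.cases ?_ fun _ => ?_)) <;>
      simp only [g, Fin.cons_zero, Fin.cons_succ]
    · exact continuous_shiftedLegendre n
    all_goals fun_prop
  have hintegrand (x : Fin (m + 3) → ℝ) : ∏ i, g i (x i) = shiftedLegendre n (x ⟨0, by omega⟩) *
      (1 - x ⟨1, by omega⟩) ^ n * (∑ i ∈ range (n + 1), c i * x ⟨2, by omega⟩ ^ i) := by
    simp only [g, Fin.prod_univ_succ, Fin.cons_zero, Fin.cons_succ, prod_const_one, mul_one,
      ← mul_assoc]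
    -- `⟨2, _⟩` and `(Fin.succ 0).succ` are definitionally equal
    rfl
  have hterm (k : ℕ) : ∏ i, ∫ y in (0 : ℝ)..1, y ^ k * g i y =
      (-1) ^ n * k.descFactorial n / n ! * (k ! * n ! / (k + n + 1)!) *
        (k ! * n ! / (k + n + 1)!) * (∑ i ∈ range (n + 1), c i / (k + 1 + i)) *
        ((k : ℝ) + 1)⁻¹ ^ m := by
    simp only [g, Fin.prod_univ_succ, Fin.cons_zero, Fin.cons_succ, mul_one, prod_const,
      integral_pow_mul_shiftedLegendre, integral_pow_mul_one_sub_pow, integral_pow_mul_sum_mul_pow,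
      integral_pow, one_pow, zero_pow k.succ_ne_zero, sub_zero, one_div, card_univ,
      Fintype.card_fin]
    ring
  have hsupport : ∀ k < n, ∏ i, ∫ y in (0 : ℝ)..1, y ^ k * g i y = 0 := fun k hk => by
    rw [hterm, Nat.descFactorial_eq_zero_iff_lt.mpr hk]
    simp
  simp_rw [← hintegrand]
  rw [setIntegral_prod_div_one_sub_prod_eq_tsum (by simp) hg, ← (add_right_injective n).tsum_eq,
    ← tsum_mul_left]
  · refine tsum_congr fun j => ?_
    rw [hterm, eulerBeta_natCast_add_one, ← descPochhammer_eval_eq_prod_range,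
      descPochhammer_eval_eq_descFactorial, Nat.add_sub_cancel]
    ring
  · intro k hk
    exact ⟨k - n, Nat.add_sub_of_le (not_lt.mp fun h => hk (hsupport k h))⟩
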